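/- Fix any b-coloring of the constructed graph H with k colors, and for each incident pair (e, v) with v ∈ e ∈ E(G) let C_{e,v} be the set of colors appearing on the vertices of L_{e,v}. Then for all incident pairs (e, v) and (e', v') with (e, v) ≠ (e', v'), the sets C_{e,v} and C_{e',v'} are disjoint. -/

import Mathlib

/-
The centre `s*` of the superstar is forced to be a b-vertex. A b-vertex of a b-coloring with
`k` colors has at least `k - 1` neighbours, so all b-vertices of `H` lie in
`{s*} ∪ V(G) ∪ Q ∪ A ∪ X`, a set of at most `k + m` vertices. This set contains a b-vertex of
each of the `k` colors and, for every edge `e = uv`, a vertex among `x_{e,u}, x_{e,v}, q_{e,1}`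
that is not a b-vertex; if `s*` were not a b-vertex either, that would be `k + m + 1` distinct
vertices. As `s*` has exactly `k - 1` neighbours, the leaves of the superstar then receive
pairwise distinct colors, and the sets `L_{e,v}` are pairwise disjoint sets of such leaves.
-/

open Finset

/-- `a` is a b-vertex of the coloring `c`: it has a neighbor in every color class
other than its own. -/
def IsBVertex {VH : Type*} (H : SimpleGraph VH) {k : ℕ} (c : VH → Fin k) (a : VH) : Prop :=
  ∀ col : Fin k, col ≠ c a → ∃ b : VH, H.Adj a b ∧ c b = col

/-- `c` is a b-coloring of `H` with `k` colors: a proper coloring using all `k` colors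
in which every color class contains a b-vertex. -/
def IsBColoring {VH : Type*} (H : SimpleGraph VH) (k : ℕ) (c : VH → Fin k) : Prop :=
  (∀ ⦃a b : VH⦄, H.Adj a b → c a ≠ c b) ∧ Function.Surjective c ∧
    ∀ col : Fin k, ∃ a : VH, c a = col ∧ IsBVertex H c a

variable {V : Type*} [Fintype V] [DecidableEq V]

/-- `W`, the total weight of all edges. -/
def totW (G : SimpleGraph V) [DecidableRel G.Adj] (wt : Sym2 V → ℕ) : ℕ :=
  ∑ e ∈ G.edgeFinset, wt e

/-- `W_v`, the total weight of the edges incident with `v`. -/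
def vertW (G : SimpleGraph V) [DecidableRel G.Adj] (wt : Sym2 V → ℕ) (v : V) : ℕ :=
  ∑ e ∈ G.edgeFinset.filter (fun e => v ∈ e), wt e

/-- `k = 2W + 3m + n + 2`. -/
def numColors (G : SimpleGraph V) [DecidableRel G.Adj] (wt : Sym2 V → ℕ) : ℕ :=
  2 * totW G wt + 3 * G.edgeFinset.card + Fintype.card V + 2

/-- An orientation of `(G, wt)` (given by choosing a head `o e ∈ e` for every edge `e`)
is circulating if, at every vertex, the entering weight equals the leaving weight. -/
def IsCirculating (G : SimpleGraph V) [DecidableRel G.Adj] (wt : Sym2 V → ℕ)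
    (o : Sym2 V → V) : Prop :=
  (∀ e ∈ G.edgeFinset, o e ∈ e) ∧
    ∀ v : V,
      ∑ e ∈ G.edgeFinset.filter (fun e => v ∈ e ∧ o e = v), wt e =
        ∑ e ∈ G.edgeFinset.filter (fun e => v ∈ e ∧ o e ≠ v), wt e

/-- The data of the construction of the graph `H` from `(G, wt)`. -/
structure GadgetData (V : Type*) [Fintype V] [DecidableEq V]
    (G : SimpleGraph V) [DecidableRel G.Adj] (wt : Sym2 V → ℕ) where
  /-- the vertex type of `H` -/
  VH : Type*
  fintypeVH : Fintype VH
  decEqVH : DecidableEq VH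
  /-- the graph `H` -/
  H : SimpleGraph VH
  decAdj : DecidableRel H.Adj
  /-- the center `s*` of the superstar -/
  sstar : VH
  /-- the leaves of the superstar -/
  Sleaves : Finset VH
  /-- the centers of the anonymous stars -/
  Acenters : Finset VH
  /-- the leaves of each anonymous star -/
  Aleaves : VH → Finset VH
  /-- the sets `L_{e,v}` (subsets of the superstar leaves) -/
  L : Sym2 V → V → Finset VH
  /-- the copy of a vertex of `G` inside `H` -/
  orig : V → VH
  /-- the sets `P_v` -/
  P : V → Finset VH
  /-- the vertices `x_{e,v}` -/
  x : Sym2 V → V → VH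
  /-- the sets `Y_e` -/
  Y : Sym2 V → Finset VH
  /-- the sets `Z_e` -/
  Z : Sym2 V → Finset VH
  /-- the vertices `q_{e,1}, q_{e,2}` -/
  q : Sym2 V → Fin 2 → VH

namespace GadgetData

variable {G : SimpleGraph V} [DecidableRel G.Adj] {wt : Sym2 V → ℕ}

/-- The set `X = {x_{e,v} : v ∈ e ∈ E(G)}`. -/
def Xset (g : GadgetData V G wt) : Finset g.VH :=
  letI := g.fintypeVH; letI := g.decEqVH
  G.edgeFinset.biUnion fun e => (Finset.univ.filter fun v => v ∈ e).image (g.x e)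

/-- The set `Q = {q_{e,1}, q_{e,2} : e ∈ E(G)}`. -/
def Qset (g : GadgetData V G wt) : Finset g.VH :=
  letI := g.decEqVH
  G.edgeFinset.biUnion fun e => {g.q e 0, g.q e 1}

/-- The parts into which the vertex set of `H` is partitioned. -/
def parts (g : GadgetData V G wt) : List (Finset g.VH) :=
  letI := g.fintypeVH; letI := g.decEqVH
  [{g.sstar}, g.Sleaves, g.Acenters, g.Acenters.biUnion g.Aleaves,
    Finset.univ.image g.orig, Finset.univ.biUnion g.P,
    g.Xset, G.edgeFinset.biUnion g.Y, G.edgeFinset.biUnion g.Z, g.Qset]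

/-- One directional specification of the adjacencies of `H`. -/
def AdjSpec (g : GadgetData V G wt) (a b : g.VH) : Prop :=
  (a = g.sstar ∧ b ∈ g.Sleaves) ∨
  (∃ s ∈ g.Acenters, a = s ∧ b ∈ g.Aleaves s) ∨
  (∃ v : V, a = g.orig v ∧ b ∈ g.P v) ∨
  (∃ e ∈ G.edgeFinset, ∃ v : V, v ∈ e ∧ a = g.orig v ∧ (b ∈ g.L e v ∨ b ∈ g.Y e)) ∨
  (∃ e ∈ G.edgeFinset, ∃ v : V, v ∈ e ∧ a = g.x e v ∧
    (b ∈ g.Y e ∨ b ∈ g.Z e ∨ b ∈ g.L e v)) ∨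
  (∃ e ∈ G.edgeFinset, a = g.q e 0 ∧ b = g.q e 1) ∨
  (∃ e ∈ G.edgeFinset, ∃ h : Fin 2, a = g.q e h ∧
    (b ∈ g.Z e ∨ (∃ v : V, v ∈ e ∧ b ∈ g.L e v) ∨ (∃ v : V, v ∈ e ∧ b = g.x e v)))

/-- Degree in `H`. -/
def deg (g : GadgetData V G wt) (a : g.VH) : ℕ :=
  letI := g.fintypeVH; letI := g.decEqVH; letI := g.decAdj
  g.H.degree a

/-- The set `{s*} ∪ V(G) ∪ Q ∪ A ∪ X`. -/
def bigSet (g : GadgetData V G wt) : Finset g.VH :=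
  letI := g.fintypeVH; letI := g.decEqVH
  {g.sstar} ∪ Finset.univ.image g.orig ∪ g.Qset ∪ g.Acenters ∪ g.Xset

end GadgetData

/-- The construction of the graph `H` from `(G, wt)`: the data together with all the
requirements (sizes of the parts, their disjointness, and the adjacency relation). -/
structure Gadget (V : Type*) [Fintype V] [DecidableEq V]
    (G : SimpleGraph V) [DecidableRel G.Adj] (wt : Sym2 V → ℕ)
    extends GadgetData V G wt where
  card_Sleaves : Sleaves.card = numColors G wt - 1
  card_Acenters : Acenters.card = 2 * totW G wt + 1
  card_Aleaves : ∀ s ∈ Acenters, (Aleaves s).card = numColors G wt - 1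
  Aleaves_disjoint : ∀ s ∈ Acenters, ∀ s' ∈ Acenters, s ≠ s' →
    Disjoint (Aleaves s) (Aleaves s')
  L_subset : ∀ e ∈ G.edgeFinset, ∀ v ∈ e, L e v ⊆ Sleaves
  card_L : ∀ e ∈ G.edgeFinset, ∀ v ∈ e, (L e v).card = wt e
  L_disjoint : ∀ e ∈ G.edgeFinset, ∀ v ∈ e, ∀ e' ∈ G.edgeFinset, ∀ v' ∈ e',
    (e, v) ≠ (e', v') → Disjoint (L e v) (L e' v')
  card_P : ∀ v : V, 2 * (P v).card + 3 * vertW G wt v + 2 = 2 * numColors G wt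
  card_Y : ∀ e ∈ G.edgeFinset, (Y e).card = wt e
  card_Z : ∀ e ∈ G.edgeFinset, (Z e).card + 2 * wt e + 3 = numColors G wt
  orig_inj : Function.Injective orig
  P_disjoint : ∀ v v' : V, v ≠ v' → Disjoint (P v) (P v')
  x_inj : ∀ e ∈ G.edgeFinset, ∀ v ∈ e, ∀ e' ∈ G.edgeFinset, ∀ v' ∈ e',
    x e v = x e' v' → (e, v) = (e', v')
  Y_disjoint : ∀ e ∈ G.edgeFinset, ∀ e' ∈ G.edgeFinset, e ≠ e' → Disjoint (Y e) (Y e')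
  Z_disjoint : ∀ e ∈ G.edgeFinset, ∀ e' ∈ G.edgeFinset, e ≠ e' → Disjoint (Z e) (Z e')
  q_inj : ∀ e ∈ G.edgeFinset, ∀ h : Fin 2, ∀ e' ∈ G.edgeFinset, ∀ h' : Fin 2,
    q e h = q e' h' → (e, h) = (e', h')
  parts_disjoint : toGadgetData.parts.Pairwise Disjoint
  parts_cover : ∀ a : VH, ∃ p ∈ toGadgetData.parts, a ∈ p
  adj_iff : ∀ a b : VH, H.Adj a b ↔
    toGadgetData.AdjSpec a b ∨ toGadgetData.AdjSpec b a

namespace IsBVertex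

variable {VH : Type*} {H : SimpleGraph VH} {k : ℕ} {c : VH → Fin k} {a : VH}
  {S : Finset VH}

lemma sub_one_le_card_image (hb : IsBVertex H c a) (hS : ∀ ⦃b⦄, H.Adj a b → b ∈ S) :
    k - 1 ≤ #(S.image c) := by
  have hsub : univ.erase (c a) ⊆ S.image c := fun col hcol => by
    obtain ⟨b, hab, rfl⟩ := hb col (Finset.ne_of_mem_erase hcol)
    exact mem_image_of_mem c (hS hab)
  simpa using card_le_card hsub

lemma sub_one_le_card (hb : IsBVertex H c a) (hS : ∀ ⦃b⦄, H.Adj a b → b ∈ S) : k - 1 ≤ #S :=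
  (hb.sub_one_le_card_image hS).trans card_image_le

lemma injOn (hb : IsBVertex H c a) (hS : ∀ ⦃b⦄, H.Adj a b → b ∈ S) (hcard : #S ≤ k - 1) :
    Set.InjOn c S :=
  injOn_of_card_image_eq (card_image_le.antisymm ((hb.sub_one_le_card_image hS).trans' hcard))

end IsBVertex

lemma seven_le_numColors {V : Type*} [Fintype V] [DecidableEq V] {G : SimpleGraph V}
    [DecidableRel G.Adj] {wt : Sym2 V → ℕ} {e : Sym2 V} (he : e ∈ G.edgeFinset)
    (hwt : 1 ≤ wt e) : 7 ≤ numColors G wt := by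
  have hm : 1 ≤ #G.edgeFinset := card_pos.mpr ⟨e, he⟩
  have hW : wt e ≤ totW G wt := single_le_sum (fun _ _ => Nat.zero_le _) he
  unfold numColors
  omega

lemma Sym2.card_filter_mem_le_two {α : Type*} [Fintype α] [DecidableEq α] (e : Sym2 α) :
    #{v | v ∈ e} ≤ 2 := by
  rw [show ({v | v ∈ e} : Finset α) = e.toFinset by ext; simp [Sym2.mem_toFinset],
    Sym2.card_toFinset]
  split_ifs <;> omega

namespace Gadget

variable {V : Type*} [Fintype V] [DecidableEq V] {G : SimpleGraph V} [DecidableRel G.Adj]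
  {wt : Sym2 V → ℕ} (g : Gadget V G wt)

instance : DecidableEq g.VH := g.decEqVH

lemma exists_mem_parts_getElem (a : g.VH) : ∃ i, ∃ h : i < g.parts.length, a ∈ g.parts[i] := by
  obtain ⟨p, hp, ha⟩ := g.parts_cover a
  obtain ⟨i, hi, rfl⟩ := List.getElem_of_mem hp
  exact ⟨i, hi, ha⟩

/-- Part indices turn the disjointness of the parts into arithmetic, which is how `grind` discards
the impossible cases of `AdjSpec` in the adjacency lemmas below. -/
noncomputable def part (a : g.VH) : ℕ := Classical.choose (g.exists_mem_parts_getElem a)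

lemma part_eq {a : g.VH} {i : ℕ} (hi : i < g.parts.length) (ha : a ∈ g.parts[i]) :
    g.part a = i := by
  obtain ⟨hj, haj⟩ := Classical.choose_spec (g.exists_mem_parts_getElem a)
  have hdisj := List.pairwise_iff_getElem.mp g.parts_disjoint
  by_contra hne
  rcases Nat.lt_or_gt_of_ne hne with h | h
  · exact disjoint_left.mp (hdisj _ _ hj hi h) haj ha
  · exact disjoint_left.mp (hdisj _ _ hi hj h) ha haj

variable {g}

@[grind! .]
lemma part_sstar : g.part g.sstar = 0 :=
  g.part_eq (by simp [GadgetData.parts]) (by simp [GadgetData.parts])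

@[grind →]
lemma part_of_mem_Sleaves {a : g.VH} (h : a ∈ g.Sleaves) : g.part a = 1 :=
  g.part_eq (by simp [GadgetData.parts]) (by simpa [GadgetData.parts])

@[grind →]
lemma part_of_mem_Acenters {a : g.VH} (h : a ∈ g.Acenters) : g.part a = 2 :=
  g.part_eq (by simp [GadgetData.parts]) (by simpa [GadgetData.parts])

@[grind →]
lemma part_of_mem_Aleaves {s a : g.VH} (hs : s ∈ g.Acenters) (h : a ∈ g.Aleaves s) :
    g.part a = 3 :=
  g.part_eq (by simp [GadgetData.parts]) (by simpa [GadgetData.parts] using ⟨s, hs, h⟩)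

@[grind! .]
lemma part_orig (v : V) : g.part (g.orig v) = 4 :=
  g.part_eq (by simp [GadgetData.parts]) (by simp [GadgetData.parts])

@[grind →]
lemma part_of_mem_P {v : V} {a : g.VH} (h : a ∈ g.P v) : g.part a = 5 :=
  g.part_eq (by simp [GadgetData.parts]) (by simpa [GadgetData.parts] using ⟨v, h⟩)

@[grind! .]
lemma part_x {e : Sym2 V} {v : V} (he : e ∈ G.edgeFinset) (hv : v ∈ e) :
    g.part (g.x e v) = 6 :=
  g.part_eq (by simp [GadgetData.parts]) <| by
    simpa [GadgetData.parts, GadgetData.Xset] using ⟨e, G.mem_edgeFinset.mp he, v, hv, rfl⟩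

@[grind →]
lemma part_of_mem_Y {e : Sym2 V} {a : g.VH} (he : e ∈ G.edgeFinset) (h : a ∈ g.Y e) :
    g.part a = 7 :=
  g.part_eq (by simp [GadgetData.parts]) <| by
    simpa [GadgetData.parts] using ⟨e, G.mem_edgeFinset.mp he, h⟩

@[grind →]
lemma part_of_mem_Z {e : Sym2 V} {a : g.VH} (he : e ∈ G.edgeFinset) (h : a ∈ g.Z e) :
    g.part a = 8 :=
  g.part_eq (by simp [GadgetData.parts]) <| by
    simpa [GadgetData.parts] using ⟨e, G.mem_edgeFinset.mp he, h⟩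

@[grind! .]
lemma part_q {e : Sym2 V} (he : e ∈ G.edgeFinset) (i : Fin 2) : g.part (g.q e i) = 9 :=
  g.part_eq (by simp [GadgetData.parts]) <| by
    simpa [GadgetData.parts, GadgetData.Qset] using
      ⟨e, G.mem_edgeFinset.mp he, by fin_cases i <;> simp⟩

@[grind →]
lemma part_of_mem_L {e : Sym2 V} {v : V} {a : g.VH} (he : e ∈ G.edgeFinset) (hv : v ∈ e)
    (h : a ∈ g.L e v) : g.part a = 1 :=
  part_of_mem_Sleaves (g.L_subset e he v hv h)

@[grind →]
lemma eq_of_mem_Aleaves {s s' l : g.VH} (hs : s ∈ g.Acenters) (hs' : s' ∈ g.Acenters)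
    (hl : l ∈ g.Aleaves s) (hl' : l ∈ g.Aleaves s') : s = s' := by
  by_contra hne
  exact disjoint_left.mp (g.Aleaves_disjoint s hs s' hs' hne) hl hl'

@[grind →]
lemma eq_of_mem_P {v v' : V} {p : g.VH} (hp : p ∈ g.P v) (hp' : p ∈ g.P v') : v = v' := by
  by_contra hne
  exact disjoint_left.mp (g.P_disjoint v v' hne) hp hp'

@[grind →]
lemma eq_of_mem_Y {e e' : Sym2 V} {y : g.VH} (he : e ∈ G.edgeFinset) (he' : e' ∈ G.edgeFinset)
    (hy : y ∈ g.Y e) (hy' : y ∈ g.Y e') : e = e' := by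
  by_contra hne
  exact disjoint_left.mp (g.Y_disjoint e he e' he' hne) hy hy'

@[grind →]
lemma eq_of_mem_Z {e e' : Sym2 V} {z : g.VH} (he : e ∈ G.edgeFinset) (he' : e' ∈ G.edgeFinset)
    (hz : z ∈ g.Z e) (hz' : z ∈ g.Z e') : e = e' := by
  by_contra hne
  exact disjoint_left.mp (g.Z_disjoint e he e' he' hne) hz hz'

@[grind →]
lemma eq_of_mem_L {e e' : Sym2 V} {v v' : V} {l : g.VH} (he : e ∈ G.edgeFinset) (hv : v ∈ e)
    (he' : e' ∈ G.edgeFinset) (hv' : v' ∈ e') (hl : l ∈ g.L e v) (hl' : l ∈ g.L e' v') :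
    e = e' ∧ v = v' := by
  by_contra hne
  exact disjoint_left.mp (g.L_disjoint e he v hv e' he' v' hv' (by simpa using hne)) hl hl'

@[grind →]
lemma eq_of_x_eq {e e' : Sym2 V} {v v' : V} (he : e ∈ G.edgeFinset) (hv : v ∈ e)
    (he' : e' ∈ G.edgeFinset) (hv' : v' ∈ e') (h : g.x e v = g.x e' v') : e = e' ∧ v = v' := by
  simpa using g.x_inj e he v hv e' he' v' hv' h

@[grind →]
lemma eq_of_q_eq {e e' : Sym2 V} {i i' : Fin 2} (he : e ∈ G.edgeFinset)
    (he' : e' ∈ G.edgeFinset) (h : g.q e i = g.q e' i') : e = e' ∧ i = i' := by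
  simpa using g.q_inj e he i e' he' i' h

lemma adj_sstar {b : g.VH} (h : g.H.Adj g.sstar b) : b ∈ g.Sleaves := by
  rcases (g.adj_iff _ _).1 h with h | h <;> simp only [GadgetData.AdjSpec] at h <;> grind

lemma adj_x {e : Sym2 V} {v : V} {b : g.VH} (he : e ∈ G.edgeFinset) (hv : v ∈ e)
    (h : g.H.Adj (g.x e v) b) : b ∈ g.Y e ∨ b ∈ g.Z e ∨ b ∈ g.L e v ∨ ∃ i, b = g.q e i := by
  rcases (g.adj_iff _ _).1 h with h | h <;> simp only [GadgetData.AdjSpec] at h <;> grind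

lemma adj_q {e : Sym2 V} {i : Fin 2} {b : g.VH} (he : e ∈ G.edgeFinset)
    (h : g.H.Adj (g.q e i) b) :
    b ∈ g.Z e ∨ (∃ v ∈ e, b ∈ g.L e v) ∨ (∃ v ∈ e, b = g.x e v) ∨ ∃ j, b = g.q e j := by
  rcases (g.adj_iff _ _).1 h with h | h <;> simp only [GadgetData.AdjSpec] at h <;> grind

lemma adj_of_mem_L {e : Sym2 V} {v : V} {l b : g.VH} (he : e ∈ G.edgeFinset) (hv : v ∈ e)
    (hl : l ∈ g.L e v) (h : g.H.Adj l b) :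
    b = g.sstar ∨ b = g.orig v ∨ b = g.x e v ∨ ∃ i, b = g.q e i := by
  rcases (g.adj_iff _ _).1 h with h | h <;> simp only [GadgetData.AdjSpec] at h <;> grind

lemma adj_of_mem_Sleaves {l b : g.VH} (hl : l ∈ g.Sleaves)
    (hL : ∀ e ∈ G.edgeFinset, ∀ v ∈ e, l ∉ g.L e v) (h : g.H.Adj l b) : b = g.sstar := by
  rcases (g.adj_iff _ _).1 h with h | h <;> simp only [GadgetData.AdjSpec] at h <;> grind

lemma adj_of_mem_Aleaves {s l b : g.VH} (hs : s ∈ g.Acenters) (hl : l ∈ g.Aleaves s)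
    (h : g.H.Adj l b) : b = s := by
  rcases (g.adj_iff _ _).1 h with h | h <;> simp only [GadgetData.AdjSpec] at h <;> grind

lemma adj_of_mem_P {v : V} {p b : g.VH} (hp : p ∈ g.P v) (h : g.H.Adj p b) : b = g.orig v := by
  rcases (g.adj_iff _ _).1 h with h | h <;> simp only [GadgetData.AdjSpec] at h <;> grind

lemma adj_of_mem_Y {e : Sym2 V} {y b : g.VH} (he : e ∈ G.edgeFinset) (hy : y ∈ g.Y e)
    (h : g.H.Adj y b) : ∃ v ∈ e, b = g.orig v ∨ b = g.x e v := by
  rcases (g.adj_iff _ _).1 h with h | h <;> simp only [GadgetData.AdjSpec] at h <;> grind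

lemma adj_of_mem_Z {e : Sym2 V} {z b : g.VH} (he : e ∈ G.edgeFinset) (hz : z ∈ g.Z e)
    (h : g.H.Adj z b) : (∃ v ∈ e, b = g.x e v) ∨ ∃ i, b = g.q e i := by
  rcases (g.adj_iff _ _).1 h with h | h <;> simp only [GadgetData.AdjSpec] at h <;> grind

lemma x_adj_of_mem_Y {e : Sym2 V} {v : V} {y : g.VH} (he : e ∈ G.edgeFinset) (hv : v ∈ e)
    (hy : y ∈ g.Y e) : g.H.Adj (g.x e v) y :=
  (g.adj_iff _ _).2 <| Or.inl <| by simp only [GadgetData.AdjSpec]; grind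

lemma sstar_mem_bigSet : g.sstar ∈ g.bigSet := by
  simp [GadgetData.bigSet]

lemma x_mem_bigSet {e : Sym2 V} {v : V} (he : e ∈ G.edgeFinset) (hv : v ∈ e) :
    g.x e v ∈ g.bigSet := by
  simp only [GadgetData.bigSet, GadgetData.Xset, mem_union, mem_biUnion, mem_image, mem_filter]
  exact Or.inr ⟨e, he, v, ⟨mem_univ v, hv⟩, rfl⟩

lemma q_mem_bigSet {e : Sym2 V} (he : e ∈ G.edgeFinset) (i : Fin 2) : g.q e i ∈ g.bigSet := by
  simp only [GadgetData.bigSet, GadgetData.Qset, mem_union, mem_biUnion]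
  exact Or.inl <| Or.inl <| Or.inr ⟨e, he, by fin_cases i <;> simp⟩

section NotBVertex

variable {k : ℕ} {c : g.VH → Fin k}

lemma not_isBVertex_of_mem_Sleaves (hk : 7 ≤ k) {l : g.VH} (hl : l ∈ g.Sleaves) :
    ¬ IsBVertex g.H c l := by
  intro hb
  by_cases hL : ∃ e ∈ G.edgeFinset, ∃ v ∈ e, l ∈ g.L e v
  · obtain ⟨e, he, v, hv, hlL⟩ := hL
    have := hb.sub_one_le_card (S := {g.sstar, g.orig v, g.x e v, g.q e 0, g.q e 1})
      fun b h => by simpa [Fin.exists_fin_two] using g.adj_of_mem_L he hv hlL h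
    have := card_le_five (a := g.sstar) (b := g.orig v) (c := g.x e v) (d := g.q e 0)
      (e := g.q e 1)
    omega
  · push Not at hL
    have := hb.sub_one_le_card (S := {g.sstar}) fun b h => by
      simpa using g.adj_of_mem_Sleaves hl hL h
    simp at this
    omega

lemma not_isBVertex_of_mem_Aleaves (hk : 7 ≤ k) {s l : g.VH} (hs : s ∈ g.Acenters)
    (hl : l ∈ g.Aleaves s) : ¬ IsBVertex g.H c l := fun hb => by
  have := hb.sub_one_le_card (S := {s}) fun b h => by simpa using g.adj_of_mem_Aleaves hs hl h
  simp at this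
  omega

lemma not_isBVertex_of_mem_P (hk : 7 ≤ k) {v : V} {p : g.VH} (hp : p ∈ g.P v) :
    ¬ IsBVertex g.H c p := fun hb => by
  have := hb.sub_one_le_card (S := {g.orig v}) fun b h => by simpa using g.adj_of_mem_P hp h
  simp at this
  omega

lemma not_isBVertex_of_mem_Y (hk : 7 ≤ k) {e : Sym2 V} {y : g.VH} (he : e ∈ G.edgeFinset)
    (hy : y ∈ g.Y e) : ¬ IsBVertex g.H c y := by
  induction e using Sym2.ind with
  | _ u v =>
    intro hb
    have := hb.sub_one_le_card (S := {g.orig u, g.orig v, g.x s(u, v) u, g.x s(u, v) v})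
      fun b h => by have := g.adj_of_mem_Y he hy h; simp at this ⊢; tauto
    have := card_le_four (a := g.orig u) (b := g.orig v) (c := g.x s(u, v) u)
      (d := g.x s(u, v) v)
    omega

lemma not_isBVertex_of_mem_Z (hk : 7 ≤ k) {e : Sym2 V} {z : g.VH} (he : e ∈ G.edgeFinset)
    (hz : z ∈ g.Z e) : ¬ IsBVertex g.H c z := by
  induction e using Sym2.ind with
  | _ u v =>
    intro hb
    have := hb.sub_one_le_card
      (S := {g.x s(u, v) u, g.x s(u, v) v, g.q s(u, v) 0, g.q s(u, v) 1})
      fun b h => by have := g.adj_of_mem_Z he hz h; simp [Fin.exists_fin_two] at this ⊢; tauto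
    have := card_le_four (a := g.x s(u, v) u) (b := g.x s(u, v) v) (c := g.q s(u, v) 0)
      (d := g.q s(u, v) 1)
    omega

lemma mem_bigSet_of_isBVertex (hk : 7 ≤ k) {a : g.VH} (hb : IsBVertex g.H c a) :
    a ∈ g.bigSet := by
  obtain ⟨p, hp, ha⟩ := g.parts_cover a
  simp only [GadgetData.parts, List.mem_cons, List.not_mem_nil, or_false] at hp
  simp only [GadgetData.bigSet, mem_union, mem_singleton]
  rcases hp with rfl | rfl | rfl | rfl | rfl | rfl | rfl | rfl | rfl | rfl
  · simp_all
  · exact absurd hb (not_isBVertex_of_mem_Sleaves hk ha)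
  · simp_all
  · obtain ⟨s, hs, hl⟩ := mem_biUnion.mp ha
    exact absurd hb (not_isBVertex_of_mem_Aleaves hk hs hl)
  · simp_all
  · obtain ⟨v, -, hp⟩ := mem_biUnion.mp ha
    exact absurd hb (not_isBVertex_of_mem_P hk hp)
  · simp_all
  · obtain ⟨e, he, hy⟩ := mem_biUnion.mp ha
    exact absurd hb (not_isBVertex_of_mem_Y hk he hy)
  · obtain ⟨e, he, hz⟩ := mem_biUnion.mp ha
    exact absurd hb (not_isBVertex_of_mem_Z hk he hz)
  · simp_all

end NotBVertex

variable (g) in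
lemma card_bigSet_le : #g.bigSet ≤ numColors G wt + #G.edgeFinset := by
  have hV : #(univ.image g.orig) ≤ Fintype.card V := card_image_le
  have hQ : #g.Qset ≤ #G.edgeFinset * 2 :=
    card_biUnion_le_card_mul _ _ _ fun _ _ => card_le_two
  have hX : #g.Xset ≤ #G.edgeFinset * 2 :=
    card_biUnion_le_card_mul _ _ _ fun e _ => card_image_le.trans e.card_filter_mem_le_two
  have h1 := card_union_le ({g.sstar} ∪ univ.image g.orig ∪ g.Qset ∪ g.Acenters) g.Xset
  have h2 := card_union_le ({g.sstar} ∪ univ.image g.orig ∪ g.Qset) g.Acenters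
  have h3 := card_union_le ({g.sstar} ∪ univ.image g.orig) g.Qset
  have h4 := card_union_le {g.sstar} (univ.image g.orig)
  have hA := g.card_Acenters
  simp only [GadgetData.bigSet, card_singleton, numColors] at *
  omega

section BColoring

variable {c : g.VH → Fin (numColors G wt)}

lemma injOn_of_isBVertex_x {e : Sym2 V} {v : V} (he : e ∈ G.edgeFinset) (hv : v ∈ e)
    (hb : IsBVertex g.H c (g.x e v)) :
    Set.InjOn c ↑(g.Y e ∪ g.Z e ∪ g.L e v ∪ {g.q e 0, g.q e 1}) := by
  refine hb.injOn (fun b h => ?_) ?_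
  · have := g.adj_x he hv h
    simp only [Fin.exists_fin_two] at this
    simp only [mem_union, mem_insert, mem_singleton]
    tauto
  · have h1 := card_union_le (g.Y e ∪ g.Z e ∪ g.L e v) {g.q e 0, g.q e 1}
    have h2 := card_union_le (g.Y e ∪ g.Z e) (g.L e v)
    have h3 := card_union_le (g.Y e) (g.Z e)
    have := g.card_Y e he
    have := g.card_Z e he
    have := g.card_L e he v hv
    have := card_le_two (a := g.q e 0) (b := g.q e 1)
    omega

/-- If all `g.x e v` and `g.q e 0` were b-vertices, the neighbourhoods of the `g.x e v` would be
rainbow, and then no neighbour of `g.q e 0` could carry the color of a vertex of `Y_e`. -/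
lemma exists_not_isBVertex (hc : ∀ ⦃a b : g.VH⦄, g.H.Adj a b → c a ≠ c b) {e : Sym2 V}
    (he : e ∈ G.edgeFinset) (hwt : 1 ≤ wt e) :
    ∃ a, ((∃ v ∈ e, a = g.x e v) ∨ a = g.q e 0) ∧ ¬ IsBVertex g.H c a := by
  by_contra! h
  have hx v (hv : v ∈ e) := injOn_of_isBVertex_x he hv (h _ (Or.inl ⟨v, hv, rfl⟩))
  obtain ⟨y, hy⟩ : (g.Y e).Nonempty := card_pos.mp (by rw [g.card_Y e he]; omega)
  have hu : e.out.1 ∈ e := e.out_fst_mem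
  have hyq : c y ≠ c (g.q e 0) := fun h' => by
    have := hx _ hu (by simp [hy]) (by simp) h'
    grind
  obtain ⟨z, hz, hcz⟩ := h (g.q e 0) (Or.inr rfl) (c y) hyq
  rcases g.adj_q he hz with hzZ | ⟨w, hw, hzL⟩ | ⟨w, hw, rfl⟩ | ⟨j, rfl⟩
  · have := hx _ hu (by simp [hzZ]) (by simp [hy]) hcz
    grind
  · have := hx w hw (by simp [hzL]) (by simp [hy]) hcz
    grind
  · exact hc (g.x_adj_of_mem_Y he hw hy) hcz
  · fin_cases j
    · exact hz.ne rfl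
    · have := hx _ hu (by simp) (by simp [hy]) hcz
      grind

lemma isBVertex_sstar (hwt : ∀ e ∈ G.edgeFinset, 1 ≤ wt e) (hk : 7 ≤ numColors G wt)
    (hc : IsBColoring g.H (numColors G wt) c) : IsBVertex g.H c g.sstar := by
  classical
  by_contra hs
  have : Nonempty g.VH := ⟨g.sstar⟩
  have hex : ∀ e ∈ G.edgeFinset, ∃ a, ((∃ v ∈ e, a = g.x e v) ∨ a = g.q e 0) ∧
      ¬ IsBVertex g.H c a := fun e he => g.exists_not_isBVertex hc.1 he (hwt e he)
  choose! φ hφX hφ using hex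
  have hB : numColors G wt ≤ #{a ∈ g.bigSet | IsBVertex g.H c a} := by
    simpa using card_le_card_of_surjOn c (t := univ) fun col _ => by
      obtain ⟨a, rfl, hb⟩ := hc.2.2 col
      exact ⟨a, by simp [mem_bigSet_of_isBVertex hk hb, hb], rfl⟩
  have hN : #G.edgeFinset + 1 ≤ #{a ∈ g.bigSet | ¬ IsBVertex g.H c a} := by
    have hinj : Set.InjOn φ G.edgeFinset := fun e he e' he' h => by
      have := hφX e he
      have := hφX e' he'
      grind
    have hsφ : g.sstar ∉ G.edgeFinset.image φ := by
      simp only [mem_image, not_exists, not_and]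
      intro e he h
      have := hφX e he
      grind
    rw [← card_image_of_injOn hinj, ← card_insert_of_notMem hsφ]
    refine card_le_card (insert_subset (mem_filter.mpr ⟨sstar_mem_bigSet, hs⟩) fun a ha => ?_)
    obtain ⟨e, he, rfl⟩ := mem_image.mp ha
    refine mem_filter.mpr ⟨?_, hφ e he⟩
    rcases hφX e he with ⟨v, hv, hxv⟩ | hq
    · exact hxv ▸ x_mem_bigSet he hv
    · exact hq ▸ q_mem_bigSet he 0
  have := card_filter_add_card_filter_not (s := g.bigSet) (fun a => IsBVertex g.H c a)
  have := g.card_bigSet_le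
  omega

end BColoring

end Gadget

theorem L_color_sets_disjoint_general
    {V : Type*} [Fintype V] [DecidableEq V] (G : SimpleGraph V) [DecidableRel G.Adj]
    (wt : Sym2 V → ℕ)
    (hwt : ∀ e ∈ G.edgeFinset, 1 ≤ wt e)
    (g : Gadget V G wt)
    (c : g.VH → Fin (numColors G wt)) (hc : IsBColoring g.H (numColors G wt) c) :
    ∀ e ∈ G.edgeFinset, ∀ v : V, v ∈ e → ∀ e' ∈ G.edgeFinset, ∀ v' : V, v' ∈ e' →
      (e, v) ≠ (e', v') →
      Disjoint ((g.L e v).image c) ((g.L e' v').image c) := by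
  intro e he v hv e' he' v' hv' hne
  have hinj : Set.InjOn c g.Sleaves :=
    (g.isBVertex_sstar hwt (seven_le_numColors he (hwt e he)) hc).injOn (fun _ => g.adj_sstar)
      g.card_Sleaves.le
  rw [disjoint_iff_inter_eq_empty, ← image_inter_of_injOn _ _ (hinj.mono (by
      simpa using And.intro (g.L_subset e he v hv) (g.L_subset e' he' v' hv'))),
    disjoint_iff_inter_eq_empty.mp (g.L_disjoint e he v hv e' he' v' hv' hne), image_empty]

/-- In any b-coloring of `H` with `k` colors, the color sets
`C_{e,v}` of the sets `L_{e,v}` are pairwise disjoint. -/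
theorem L_color_sets_disjoint
    {V : Type*} [Fintype V] [DecidableEq V] (G : SimpleGraph V) [DecidableRel G.Adj]
    (wt : Sym2 V → ℕ) (hconn : G.Connected)
    (hwt : ∀ e ∈ G.edgeFinset, 1 ≤ wt e)
    (heven : ∀ v : V, Even (vertW G wt v))
    (g : Gadget V G wt)
    (c : g.VH → Fin (numColors G wt)) (hc : IsBColoring g.H (numColors G wt) c) :
    ∀ e ∈ G.edgeFinset, ∀ v : V, v ∈ e → ∀ e' ∈ G.edgeFinset, ∀ v' : V, v' ∈ e' →
      (e, v) ≠ (e', v') →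
      Disjoint ((g.L e v).image c) ((g.L e' v').image c) :=
  L_color_sets_disjoint_general G wt hwt g c hc
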